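/- arXiv:2002.05566 — 5 statements merged into one kernel-verified Lean document; each statement's English description precedes it below -/
import Mathlib

section
/- Let Y ⊂ ℙᴺ be a hypersurface defined by an irreducible cubic form F, and let Y' denote the singular locus of Y. Then the secant variety SY' (the closure of the union of lines joining pairs of distinct points of Y') is contained in Y. -/
/-!
STATEMENT 3: Let `Y ⊂ ℙᴺ` be the hypersurface defined by an irreducible homogeneous
cubic `F`, and let `Y'` be its singular locus (common zeros of the partial derivatives).
Then the secant variety `SY'` — the (Zariski) closure of the union of the lines joining
pairs of distinct points of `Y'` — is contained in `Y`.
Everything is phrased on affine cones in `ℂ^{N+1}`; the line through two distinct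
projective points corresponds to the span of two linearly independent vectors, and
Zariski closure is expressed via polynomials vanishing on a set.
-/

open MvPolynomial

/-- Zariski closure of a subset of affine space `σ → ℂ`. -/
def zcl {σ : Type*} (S : Set (σ → ℂ)) : Set (σ → ℂ) :=
  {x | ∀ p : MvPolynomial σ ℂ, (∀ y ∈ S, eval y p = 0) → eval x p = 0}

open MvPolynomial

noncomputable section

private def lsub {n : ℕ} (u v : Fin n → ℂ) : MvPolynomial (Fin n) ℂ →ₐ[ℂ] Polynomial ℂ :=
  MvPolynomial.aeval (fun i => Polynomial.C (u i) + Polynomial.C (v i) * Polynomial.X)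

@[simp] lemma lsub_X {n : ℕ} (u v : Fin n → ℂ) (i : Fin n) :
    lsub u v (X i) = Polynomial.C (u i) + Polynomial.C (v i) * Polynomial.X := by
  simp [lsub]

@[simp] lemma lsub_C {n : ℕ} (u v : Fin n → ℂ) (a : ℂ) :
    lsub u v (C a) = Polynomial.C a := by
  simp [lsub]

lemma eval_lsub {n : ℕ} (u v : Fin n → ℂ) (F : MvPolynomial (Fin n) ℂ) (t : ℂ) :
    Polynomial.eval t (lsub u v F) = eval (u + t • v) F := by
  induction F using MvPolynomial.induction_on with
  | C a => simp
  | add p q hp hq => simp [map_add, hp, hq]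
  | mul_X p i hp =>
    rw [map_mul, lsub_X, Polynomial.eval_mul, hp]
    simp only [Polynomial.eval_add, Polynomial.eval_mul, Polynomial.eval_C, Polynomial.eval_X,
      map_mul, eval_X, Pi.add_apply, Pi.smul_apply, smul_eq_mul]
    ring

lemma deriv_lsub {n : ℕ} (u v : Fin n → ℂ) (F : MvPolynomial (Fin n) ℂ) :
    Polynomial.derivative (lsub u v F)
      = ∑ i : Fin n, Polynomial.C (v i) * lsub u v (pderiv i F) := by
  induction F using MvPolynomial.induction_on with
  | C a => simp
  | add p q hp hq => simp [map_add, hp, hq, mul_add, Finset.sum_add_distrib]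
  | mul_X p j hp =>
    have key : ∀ i : Fin n, lsub u v (pderiv i (p * X j))
        = lsub u v (pderiv i p) * (Polynomial.C (u j) + Polynomial.C (v j) * Polynomial.X)
          + (if j = i then lsub u v p else 0) := by
      intro i
      rw [pderiv_mul]
      by_cases h : j = i
      · subst h; simp
      · simp [pderiv_X_of_ne h, h]
    rw [map_mul, lsub_X, Polynomial.derivative_mul, hp]
    simp only [key, mul_add, Finset.sum_add_distrib, mul_ite, mul_zero,
      Finset.sum_ite_eq, Finset.mem_univ, if_true, Polynomial.derivative_add,
      Polynomial.derivative_C, Polynomial.derivative_C_mul_X, zero_add]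
    simp only [Finset.sum_mul, mul_assoc]
    ring

lemma eval_smul_hom {σ : Type*} {F : MvPolynomial σ ℂ} {k : ℕ} (h : F.IsHomogeneous k)
    (c : ℂ) (x : σ → ℂ) : eval (c • x) F = c ^ k * eval x F := by
  rw [eval_eq, eval_eq, Finset.mul_sum]
  refine Finset.sum_congr rfl fun d hd => ?_
  have hdeg : ∑ i ∈ d.support, d i = k := by
    have h2 := h (mem_support_iff.mp hd)
    change (Finsupp.weight fun _ => 1) d = k at h2
    rw [← Finsupp.degree_eq_weight_one] at h2
    exact h2
  calc (coeff d F) * ∏ i ∈ d.support, (c • x) i ^ d i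
      = (coeff d F) * ((∏ i ∈ d.support, c ^ d i) * ∏ i ∈ d.support, x i ^ d i) := by
        rw [← Finset.prod_mul_distrib]; simp [mul_pow]
    _ = c ^ k * ((coeff d F) * ∏ i ∈ d.support, x i ^ d i) := by
        rw [Finset.prod_pow_eq_pow_sum, hdeg]; ring

lemma sing_eval_zero {n : ℕ} {F : MvPolynomial (Fin n) ℂ} (hF : F.IsHomogeneous 3)
    {u : Fin n → ℂ} (hu : ∀ i, eval u (pderiv i F) = 0) : eval u F = 0 := by
  have hq : lsub 0 u F = Polynomial.C (eval u F) * Polynomial.X ^ 3 := by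
    apply Polynomial.funext
    intro t
    rw [eval_lsub, show (0 : Fin n → ℂ) + t • u = t • u by simp, eval_smul_hom hF,
      Polynomial.eval_mul, Polynomial.eval_pow, Polynomial.eval_C, Polynomial.eval_X]
    ring
  have hd := deriv_lsub 0 u F
  rw [hq] at hd
  have h1 := congrArg (Polynomial.eval 1) hd
  rw [Polynomial.eval_finset_sum] at h1
  simp only [Polynomial.eval_mul, Polynomial.eval_C, eval_lsub, zero_add, one_smul, hu,
    mul_zero, Finset.sum_const_zero, Polynomial.derivative_C_mul, Polynomial.derivative_X_pow,
    Polynomial.eval_pow, Polynomial.eval_X, Polynomial.eval_natCast, one_pow, mul_one] at h1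
  have h2 : eval u F * 3 = 0 := by linear_combination h1
  rcases mul_eq_zero.mp h2 with h | h
  · exact h
  · norm_num at h

lemma line_eval_zero {n : ℕ} {F : MvPolynomial (Fin n) ℂ} (hF : F.IsHomogeneous 3)
    {u v : Fin n → ℂ} (hu : ∀ i, eval u (pderiv i F) = 0)
    (hv : ∀ i, eval v (pderiv i F) = 0) (t : ℂ) : eval (u + t • v) F = 0 := by
  classical
  set q := lsub u v F with hqdef
  set r := lsub v u F with hrdef
  have coeffs : ∀ (a b : Fin n → ℂ), (∀ i, eval a (pderiv i F) = 0) →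
      (lsub a b F).coeff 0 = 0 ∧ (lsub a b F).coeff 1 = 0 := by
    intro a b ha
    constructor
    · rw [Polynomial.coeff_zero_eq_eval_zero, eval_lsub,
        show a + (0:ℂ) • b = a by simp]
      exact sing_eval_zero hF ha
    · have hder : (Polynomial.derivative (lsub a b F)).coeff 0 = 0 := by
        rw [Polynomial.coeff_zero_eq_eval_zero, deriv_lsub, Polynomial.eval_finset_sum]
        simp only [Polynomial.eval_mul, Polynomial.eval_C, eval_lsub, zero_smul, add_zero, ha,
          mul_zero, Finset.sum_const_zero]
      simpa [Polynomial.coeff_derivative] using hder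
  obtain ⟨hq0, hq1⟩ := coeffs u v hu
  obtain ⟨hr0, hr1⟩ := coeffs v u hv
  obtain ⟨q1, hq2⟩ : (Polynomial.X ^ 2 ∣ q) := by
    rw [Polynomial.X_pow_dvd_iff]
    intro d hd
    interval_cases d
    · exact hq0
    · exact hq1
  obtain ⟨r1, hr2⟩ : (Polynomial.X ^ 2 ∣ r) := by
    rw [Polynomial.X_pow_dvd_iff]
    intro d hd
    interval_cases d
    · exact hr0
    · exact hr1
  have key : ∀ s : ℂ, s ≠ 0 → Polynomial.eval s q = s ^ 3 * Polynomial.eval s⁻¹ r := by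
    intro s hs
    rw [hqdef, hrdef, eval_lsub, eval_lsub, ← eval_smul_hom hF s (v + s⁻¹ • u)]
    congr 1
    rw [smul_add, smul_smul, mul_inv_cancel₀ hs, one_smul, add_comm]
  have step : ∀ s : ℂ, s ≠ 0 → Polynomial.eval s⁻¹ r1 = s * Polynomial.eval s q1 := by
    intro s hs
    have k := key s hs
    rw [hq2, hr2] at k
    simp only [Polynomial.eval_mul, Polynomial.eval_pow, Polynomial.eval_X] at k
    have heq : s ^ 3 * (s⁻¹ ^ 2 * Polynomial.eval s⁻¹ r1) = s * Polynomial.eval s⁻¹ r1 := by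
      field_simp
    rw [heq] at k
    apply mul_left_cancel₀ hs
    rw [← k]
    ring
  have hq1z : q1 = 0 := by
    by_contra hne
    set d := r1.natDegree with hddef
    have main : Polynomial.X ^ (d + 1) * q1 = r1.reverse := by
      apply Polynomial.eq_of_infinite_eval_eq
      apply Set.Infinite.mono (s := {s : ℂ | s ≠ 0})
      · intro s hs
        have hs' : (s : ℂ) ≠ 0 := hs
        have : Invertible (s⁻¹ : ℂ) := invertibleOfNonzero (inv_ne_zero hs')
        have hrev := Polynomial.eval₂_reverse_mul_pow (RingHom.id ℂ) (s⁻¹) r1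
        rw [invOf_eq_inv, inv_inv] at hrev
        have hrev' : Polynomial.eval s r1.reverse * (s⁻¹) ^ d = Polynomial.eval s⁻¹ r1 := hrev
        rw [step s hs'] at hrev'
        field_simp at hrev'
        rw [div_pow, one_pow, mul_one_div, div_eq_iff (pow_ne_zero _ hs')] at hrev'
        show Polynomial.eval s (Polynomial.X ^ (d + 1) * q1) = Polynomial.eval s r1.reverse
        rw [Polynomial.eval_mul, Polynomial.eval_pow, Polynomial.eval_X, hrev']
        ring
      · have h0 : ({0}ᶜ : Set ℂ).Infinite := (Set.finite_singleton 0).infinite_compl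
        exact h0.mono fun x hx => hx
    have hdeg : (Polynomial.X ^ (d + 1) * q1).natDegree = d + 1 + q1.natDegree := by
      rw [Polynomial.natDegree_mul (pow_ne_zero _ Polynomial.X_ne_zero) hne,
        Polynomial.natDegree_X_pow]
    have hle := Polynomial.reverse_natDegree_le r1
    rw [← main, hdeg] at hle
    omega
  have : q = 0 := by rw [hq2, hq1z, mul_zero]
  rw [← eval_lsub u v F t, ← hqdef, this, Polynomial.eval_zero]

theorem stmt3 {N : ℕ} (F : MvPolynomial (Fin (N + 1)) ℂ)
    (hFirr : Irreducible F) (hFhom : F.IsHomogeneous 3) :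
    zcl {w : Fin (N + 1) → ℂ |
        ∃ y₁ ∈ {y : Fin (N + 1) → ℂ | ∀ i, eval y (pderiv i F) = 0},
        ∃ y₂ ∈ {y : Fin (N + 1) → ℂ | ∀ i, eval y (pderiv i F) = 0},
          LinearIndependent ℂ ![y₁, y₂] ∧ w ∈ Submodule.span ℂ {y₁, y₂}}
      ⊆ {w | eval w F = 0} := by
  intro w hw
  refine hw F ?_
  rintro y ⟨y₁, h₁, y₂, h₂, -, hspan⟩
  rw [Submodule.mem_span_pair] at hspan
  obtain ⟨a, b, rfl⟩ := hspan
  by_cases ha : a = 0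
  · subst ha
    rw [zero_smul, zero_add, eval_smul_hom hFhom, sing_eval_zero hFhom h₂, mul_zero]
  · have hrw : a • y₁ + b • y₂ = a • (y₁ + (b / a) • y₂) := by
      rw [smul_add, smul_smul, mul_div_cancel₀ _ ha]
    rw [hrw, eval_smul_hom hFhom, line_eval_zero hFhom h₁ h₂ (b / a), mul_zero]
end
end

section
/- Let W be a complex vector space, F a symmetric trilinear form on W defining an irreducible cubic hypersurface, and A ∈ Hom(Sym²W, W) a prolongation of aut(Ŷ), i.e. F(A(y,w),y,y) = 0 for all smooth points y of Ŷ = {F(w,w,w)=0} and all w ∈ W. Then there exists λ ∈ W* such that F(A(u,w),w,w) = λ(u)·F(w,w,w) for all u,w ∈ W. -/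
/-!
STATEMENT 5: If `F` is a symmetric trilinear form defining an irreducible cubic
hypersurface `Y = {F(w,w,w) = 0} ⊂ ℙW` and `A ∈ Hom(Sym²W, W)` is a prolongation of
`aut(Ŷ)` (i.e. `F(A(y,w),y,y) = 0` for all smooth `y ∈ Ŷ` and all `w`), then there is a
linear functional `lam ∈ W*` with `F(A(u,w),w,w) = lam(u)·F(w,w,w)` for all `u, w`.
Irreducibility is expressed by exhibiting an irreducible homogeneous cubic polynomial
`P` whose evaluation is the cubic form `w ↦ F(w,w,w)`.
-/

open MvPolynomial

namespace Stmt5Aux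

variable {n : ℕ}

/-- standard basis vectors -/
noncomputable def ee (i : Fin n) : Fin n → ℂ := Pi.single i 1

lemma expand1 {M : Type*} [AddCommMonoid M] [Module ℂ M]
    (T : (Fin n → ℂ) →ₗ[ℂ] M) (w : Fin n → ℂ) :
    T w = ∑ i, w i • T (ee i) := by
  conv_lhs => rw [← Finset.univ_sum_single w]
  rw [map_sum]
  refine Finset.sum_congr rfl fun i _ => ?_
  have h : Pi.single i (w i) = w i • ee i := by
    funext j
    by_cases hj : j = i <;> simp [ee, hj, Pi.single_apply]
  rw [h, map_smul]

lemma expand1' (S : (Fin n → ℂ) →ₗ[ℂ] ℂ) (w : Fin n → ℂ) :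
    S w = ∑ k, w k * S (ee k) := by
  rw [expand1 S w]; simp [smul_eq_mul]

lemma expand2 (S : (Fin n → ℂ) →ₗ[ℂ] (Fin n → ℂ) →ₗ[ℂ] ℂ) (w : Fin n → ℂ) :
    S w w = ∑ j, ∑ k, w j * w k * S (ee j) (ee k) := by
  conv_lhs => rw [expand1 S w]
  simp only [LinearMap.sum_apply, LinearMap.smul_apply, smul_eq_mul]
  refine Finset.sum_congr rfl fun j _ => ?_
  rw [expand1' (S (ee j)) w, Finset.mul_sum]
  exact Finset.sum_congr rfl fun k _ => by ring

lemma expand3 (T : (Fin n → ℂ) →ₗ[ℂ] (Fin n → ℂ) →ₗ[ℂ] (Fin n → ℂ) →ₗ[ℂ] ℂ)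
    (w : Fin n → ℂ) :
    T w w w = ∑ i, ∑ j, ∑ k, w i * w j * w k * T (ee i) (ee j) (ee k) := by
  conv_lhs => rw [expand1 T w]
  simp only [LinearMap.sum_apply, LinearMap.smul_apply, smul_eq_mul]
  refine Finset.sum_congr rfl fun i _ => ?_
  rw [expand2 (T (ee i)) w, Finset.mul_sum]
  refine Finset.sum_congr rfl fun j _ => ?_
  rw [Finset.mul_sum]
  exact Finset.sum_congr rfl fun k _ => by ring

/-- cubic polynomial attached to a trilinear form -/
noncomputable def cubPoly
    (T : (Fin n → ℂ) →ₗ[ℂ] (Fin n → ℂ) →ₗ[ℂ] (Fin n → ℂ) →ₗ[ℂ] ℂ) :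
    MvPolynomial (Fin n) ℂ :=
  ∑ i, ∑ j, ∑ k, C (T (ee i) (ee j) (ee k)) * X i * X j * X k

lemma eval_cubPoly (T : (Fin n → ℂ) →ₗ[ℂ] (Fin n → ℂ) →ₗ[ℂ] (Fin n → ℂ) →ₗ[ℂ] ℂ)
    (w : Fin n → ℂ) : eval w (cubPoly T) = T w w w := by
  rw [expand3 T w, cubPoly]
  simp only [map_sum, eval_mul, eval_C, eval_X]
  refine Finset.sum_congr rfl fun i _ => Finset.sum_congr rfl fun j _ =>
    Finset.sum_congr rfl fun k _ => by ring

lemma cubPoly_hom (T : (Fin n → ℂ) →ₗ[ℂ] (Fin n → ℂ) →ₗ[ℂ] (Fin n → ℂ) →ₗ[ℂ] ℂ) :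
    (cubPoly T).IsHomogeneous 3 := by
  refine IsHomogeneous.sum _ _ _ fun i _ => IsHomogeneous.sum _ _ _ fun j _ =>
    IsHomogeneous.sum _ _ _ fun k _ => ?_
  have := (((isHomogeneous_C (Fin n) (T (ee i) (ee j) (ee k))).mul
    (isHomogeneous_X ℂ i)).mul (isHomogeneous_X ℂ j)).mul (isHomogeneous_X ℂ k)
  simpa using this

/-- quadratic polynomial attached to a bilinear form -/
noncomputable def quadPoly
    (B : (Fin n → ℂ) →ₗ[ℂ] (Fin n → ℂ) →ₗ[ℂ] ℂ) : MvPolynomial (Fin n) ℂ :=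
  ∑ j, ∑ k, C (B (ee j) (ee k)) * X j * X k

lemma eval_quadPoly (B : (Fin n → ℂ) →ₗ[ℂ] (Fin n → ℂ) →ₗ[ℂ] ℂ)
    (w : Fin n → ℂ) : eval w (quadPoly B) = B w w := by
  rw [expand2 B w, quadPoly]
  simp only [map_sum, eval_mul, eval_C, eval_X]
  refine Finset.sum_congr rfl fun j _ => Finset.sum_congr rfl fun k _ => by ring

lemma quadPoly_hom (B : (Fin n → ℂ) →ₗ[ℂ] (Fin n → ℂ) →ₗ[ℂ] ℂ) :
    (quadPoly B).IsHomogeneous 2 := by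
  refine IsHomogeneous.sum _ _ _ fun j _ => IsHomogeneous.sum _ _ _ fun k _ => ?_
  have := ((isHomogeneous_C (Fin n) (B (ee j) (ee k))).mul
    (isHomogeneous_X ℂ j)).mul (isHomogeneous_X ℂ k)
  simpa using this

lemma hom_dvd_zero {P G : MvPolynomial (Fin n) ℂ}
    (hP : P.IsHomogeneous 3) (hG : G.IsHomogeneous 2) (h : P ∣ G) : G = 0 := by
  obtain ⟨R, rfl⟩ := h
  have hmem : P * R ∈ homogeneousSubmodule (Fin n) ℂ 2 :=
    (mem_homogeneousSubmodule _ _).2 hG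
  calc P * R = homogeneousComponent 2 (P * R) := by
        rw [homogeneousComponent_of_mem hmem]; simp
    _ = ∑ d ∈ Finset.range (R.totalDegree + 1),
          homogeneousComponent 2 (P * homogeneousComponent d R) := by
        conv_lhs => rw [← sum_homogeneousComponent R]
        rw [Finset.mul_sum, map_sum]
    _ = 0 := Finset.sum_eq_zero fun d _ => by
        have h3 : (P * homogeneousComponent d R).IsHomogeneous (3 + d) :=
          hP.mul (homogeneousComponent_isHomogeneous d R)
        rw [homogeneousComponent_of_mem ((mem_homogeneousSubmodule _ _).2 h3)]
        simp [show ¬ (2 = 3 + d) by omega]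

lemma hom_dvd_C {P Q : MvPolynomial (Fin n) ℂ}
    (hP : P.IsHomogeneous 3) (hQ : Q.IsHomogeneous 3) (h : P ∣ Q) :
    ∃ c : ℂ, Q = C c * P := by
  obtain ⟨R, rfl⟩ := h
  refine ⟨coeff 0 R, ?_⟩
  have hmem : P * R ∈ homogeneousSubmodule (Fin n) ℂ 3 :=
    (mem_homogeneousSubmodule _ _).2 hQ
  calc P * R = homogeneousComponent 3 (P * R) := by
        rw [homogeneousComponent_of_mem hmem]; simp
    _ = ∑ d ∈ Finset.range (R.totalDegree + 1),
          homogeneousComponent 3 (P * homogeneousComponent d R) := by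
        conv_lhs => rw [← sum_homogeneousComponent R]
        rw [Finset.mul_sum, map_sum]
    _ = ∑ d ∈ Finset.range (R.totalDegree + 1),
          if d = 0 then P * homogeneousComponent d R else 0 := by
        refine Finset.sum_congr rfl fun d _ => ?_
        have h3 : (P * homogeneousComponent d R).IsHomogeneous (3 + d) :=
          hP.mul (homogeneousComponent_isHomogeneous d R)
        rw [homogeneousComponent_of_mem ((mem_homogeneousSubmodule _ _).2 h3)]
        by_cases hd : d = 0 <;> simp [hd, show ¬(3 = 3 + d) ↔ ¬(d = 0) by omega]
    _ = C (coeff 0 R) * P := by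
        rw [Finset.sum_ite_eq' (Finset.range (R.totalDegree + 1)) 0
          (fun d => P * homogeneousComponent d R)]
        simp [homogeneousComponent_zero, mul_comm]

end Stmt5Aux

open Stmt5Aux

theorem stmt5 {n : ℕ}
    (F : (Fin n → ℂ) →ₗ[ℂ] (Fin n → ℂ) →ₗ[ℂ] (Fin n → ℂ) →ₗ[ℂ] ℂ)
    (hFsymm₁ : ∀ x y z, F x y z = F y x z)
    (hFsymm₂ : ∀ x y z, F x y z = F x z y)
    (P : MvPolynomial (Fin n) ℂ)
    (hPirr : Irreducible P)
    (hPhom : P.IsHomogeneous 3)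
    (hPF : ∀ w : Fin n → ℂ, eval w P = F w w w)
    (A : (Fin n → ℂ) →ₗ[ℂ] (Fin n → ℂ) →ₗ[ℂ] (Fin n → ℂ))
    (hAsymm : ∀ u w, A u w = A w u)
    (hprol : ∀ y : Fin n → ℂ, F y y y = 0 → F y y ≠ 0 → ∀ w, F (A y w) y y = 0) :
    ∃ lam : (Fin n → ℂ) →ₗ[ℂ] ℂ, ∀ u w : Fin n → ℂ,
      F (A u w) w w = lam u * F w w w := by
  classical
  have hPne : P ≠ 0 := hPirr.ne_zero
  -- a point where P does not vanish
  have hex : ∃ w₀ : Fin n → ℂ, eval w₀ P ≠ 0 := by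
    by_contra h
    push_neg at h
    exact hPne (MvPolynomial.funext fun x => by simp [h x])
  obtain ⟨w₀, hw₀⟩ := hex
  -- the quadratic "gradient" polynomials
  set B : Fin n → ((Fin n → ℂ) →ₗ[ℂ] (Fin n → ℂ) →ₗ[ℂ] ℂ) :=
    fun i => F.compr₂ (LinearMap.applyₗ (ee i)) with hB
  have hBapp : ∀ i y z, B i y z = F y z (ee i) := fun i y z => rfl
  have hGeval : ∀ i y, eval y (quadPoly (B i)) = F y y (ee i) := by
    intro i y; rw [eval_quadPoly]; exact hBapp i y y
  -- some gradient polynomial is nonzero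
  have hGex : ∃ i, quadPoly (B i) ≠ 0 := by
    by_contra h
    push_neg at h
    have hzero : ∀ (y : Fin n → ℂ) i, F y y (ee i) = 0 := by
      intro y i
      rw [← hGeval i y, h i]; simp
    have : ∀ y : Fin n → ℂ, F y y y = 0 := by
      intro y
      rw [expand1' (F y y) y]
      exact Finset.sum_eq_zero fun k _ => by rw [hzero y k, mul_zero]
    exact hPne (MvPolynomial.funext fun x => by simp [hPF x, this x])
  obtain ⟨i₀, hGne⟩ := hGex
  have hPprime : Prime P := hPirr.prime
  -- key pointwise divisibility
  have key : ∀ u : Fin n → ℂ, ∃ c : ℂ, ∀ w, F (A u w) w w = c * eval w P := by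
    intro u
    set Q : MvPolynomial (Fin n) ℂ := cubPoly (F.comp (A u)) with hQ
    have hQeval : ∀ w, eval w Q = F (A u w) w w := fun w => by
      rw [hQ, eval_cubPoly]; rfl
    have hQhom : Q.IsHomogeneous 3 := cubPoly_hom _
    -- Q * G i₀ vanishes on the zero locus of P
    have hvanish : ∀ y : Fin n → ℂ, eval y P = 0 → eval y (Q * quadPoly (B i₀)) = 0 := by
      intro y hy
      rw [eval_mul, hQeval, hGeval]
      by_cases hFy : F y y = 0
      · rw [hFy]; simp
      · have h0 : F (A y u) y y = 0 := hprol y (by rw [← hPF]; exact hy) hFy u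
        rw [hAsymm u y, h0, zero_mul]
    -- Nullstellensatz
    haveI hpr : (Ideal.span {P}).IsPrime := (Ideal.span_singleton_prime hPne).2 hPprime
    have hmem : Q * quadPoly (B i₀) ∈ Ideal.span {P} := by
      rw [← MvPolynomial.IsPrime.vanishingIdeal_zeroLocus (K := ℂ) (Ideal.span {P})]
      rw [MvPolynomial.mem_vanishingIdeal_iff]
      intro x hx
      exact hvanish x ((MvPolynomial.mem_zeroLocus_iff.mp hx) P
        (Ideal.subset_span rfl))
    have hdvd : P ∣ Q * quadPoly (B i₀) := (Ideal.mem_span_singleton).mp hmem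
    have hPdvdQ : P ∣ Q := by
      rcases hPprime.dvd_or_dvd hdvd with h | h
      · exact h
      · exact absurd (hom_dvd_zero hPhom (quadPoly_hom _) h) hGne
    obtain ⟨c, hc⟩ := hom_dvd_C hPhom hQhom hPdvdQ
    refine ⟨c, fun w => ?_⟩
    rw [← hQeval w, hc, eval_mul, eval_C]
  -- define lam via evaluation at w₀
  set lam : (Fin n → ℂ) →ₗ[ℂ] ℂ :=
    { toFun := fun u => F (A u w₀) w₀ w₀ * (eval w₀ P)⁻¹
      map_add' := by
        intro u v
        simp only [map_add, LinearMap.add_apply]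
        ring
      map_smul' := by
        intro r u
        simp only [map_smul, LinearMap.smul_apply, smul_eq_mul, RingHom.id_apply]
        ring } with hlam
  refine ⟨lam, fun u w => ?_⟩
  obtain ⟨c, hc⟩ := key u
  have hcu : lam u = c := by
    have h0 := hc w₀
    simp only [hlam, LinearMap.coe_mk, AddHom.coe_mk]
    rw [h0]
    field_simp
  rw [hc w, hcu, hPF w]
end

section
/- Let W = ℂ ⊕ U ⊕ K be a direct sum of complex vector spaces, σ : Sym²U → K a symmetric bilinear map, and V̂ ⊂ W the cone defined locally by w₀w₂ = σ(w₁,w₁) (i.e. the cone over the image of the map (t:u) ↦ (t² : tu : σ(u,u))). Define A : Sym²W → W by A((w₀,w₁,w₂),(w₀',w₁',w₂')) = (w₀w₀', (w₀w₁' + w₀'w₁)/2, σ(w₁,w₁')). Then A is a nonzero prolongation of aut(V̂): for every v ∈ V̂ and w ∈ W, A(v,w) ∈ T_{V̂,v}. -/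
/-!
STATEMENT 6: For `W = ℂ ⊕ U ⊕ K`, `σ : Sym²U → K` symmetric bilinear, and the cone
`V̂` over the image of `(t : u) ↦ (t² : tu : σ(u,u))` (locally `w₀w₂ = σ(w₁,w₁)`),
the map `A((w₀,w₁,w₂),(w₀',w₁',w₂')) = (w₀w₀', (w₀w₁' + w₀'w₁)/2, σ(w₁,w₁'))`
is a nonzero prolongation of `aut(V̂)`: for every point `v = (t², t•u, σ(u,u))` of `V̂`
and every `w ∈ W`, the vector `A(v,w)` lies in the tangent space `T_{V̂,v}`, i.e. it is
killed by the differential at `v` of the defining equation `w₀w₂ − σ(w₁,w₁)`.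
-/

theorem stmt6 {U K : Type*} [AddCommGroup U] [Module ℂ U]
    [AddCommGroup K] [Module ℂ K]
    (σ : U →ₗ[ℂ] U →ₗ[ℂ] K) (hσ : ∀ u v : U, σ u v = σ v u)
    (A : (ℂ × U × K) → (ℂ × U × K) → (ℂ × U × K))
    (hA : ∀ w w' : ℂ × U × K,
      A w w' = (w.1 * w'.1, (2⁻¹ : ℂ) • (w.1 • w'.2.1 + w'.1 • w.2.1),
        σ w.2.1 w'.2.1)) :
    A ≠ 0 ∧
      ∀ (t : ℂ) (u : U) (w : ℂ × U × K),
        (t ^ 2) • (A ((t ^ 2, t • u, σ u u)) w).2.2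
            + (A ((t ^ 2, t • u, σ u u)) w).1 • (σ u u)
          = (2 : ℂ) • σ (t • u) ((A ((t ^ 2, t • u, σ u u)) w).2.1) := by
  constructor
  · intro h
    have h1 := hA (1, 0, 0) (1, 0, 0)
    rw [h] at h1
    simp [Prod.ext_iff] at h1
  · intro t u w
    rw [hA]
    simp only [map_smul, LinearMap.smul_apply, smul_add, smul_smul]
    simp only [map_add, map_smul, smul_add, smul_smul]
    module
end

section
/- Let P = ℙ² be a projective plane, l and l' two distinct lines meeting at a point y, and 𝒬 a linear system of conics in P such that a general member of 𝒬 meets l only at y and meets l' only at y. Then every member of 𝒬 is a union of two (possibly coinciding) lines through y. -/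
/-!
STATEMENT 7: Let `l, l'` be two distinct lines in `ℙ²` meeting at a point `y`, and let
`𝒬` be a linear system of conics whose general member meets `l` only at `y` and meets
`l'` only at `y`.  Then every member of `𝒬` is a union of two (possibly coinciding)
lines through `y`.
Conics are homogeneous quadratic polynomials in three variables; the point `y` is a
nonzero vector `yv ∈ ℂ³`, lines are (zero loci of) nonproportional linear forms vanishing
at `yv`.  "A general member has property P" is rendered as: the members with property `P`
span the linear system.
-/

open MvPolynomial

/-- `Q` meets the line `{l = 0}` only at the point `[yv]`. -/
def MeetsOnlyAt (Q l : MvPolynomial (Fin 3) ℂ) (yv : Fin 3 → ℂ) : Prop :=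
  ∀ x : Fin 3 → ℂ, eval x Q = 0 → eval x l = 0 → ∃ c : ℂ, x = c • yv

namespace Stmt7Helpers


lemma deg_three (d : Fin 3 →₀ ℕ) {n : ℕ} (h : Finsupp.weight (1 : Fin 3 → ℕ) d = n) :
    d 0 + d 1 + d 2 = n := by
  rw [Finsupp.weight_apply, Finsupp.sum_fintype _ _ (fun _ => by simp)] at h
  simpa [Fin.sum_univ_three] using h

lemma expand1 (p : MvPolynomial (Fin 3) ℂ) (hp : p.IsHomogeneous 1) (x : Fin 3 → ℂ) :
    eval x p = coeff (Finsupp.single 0 1) p * x 0 + coeff (Finsupp.single 1 1) p * x 1 +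
      coeff (Finsupp.single 2 1) p * x 2 := by
  classical
  have hne01 : (Finsupp.single (0 : Fin 3) 1) ≠ Finsupp.single 1 1 := by
    intro h; simpa using DFunLike.congr_fun h 0
  have hne02 : (Finsupp.single (0 : Fin 3) 1) ≠ Finsupp.single 2 1 := by
    intro h; simpa using DFunLike.congr_fun h 0
  have hne12 : (Finsupp.single (1 : Fin 3) 1) ≠ Finsupp.single 2 1 := by
    intro h; simpa using DFunLike.congr_fun h 1
  have hsub : p.support ⊆
      {Finsupp.single 0 1, Finsupp.single 1 1, Finsupp.single 2 1} := by
    intro d hd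
    have h2 : d 0 + d 1 + d 2 = 1 := deg_three d (hp (mem_support_iff.mp hd))
    have hcases : (d 0 = 1 ∧ d 1 = 0 ∧ d 2 = 0) ∨ (d 0 = 0 ∧ d 1 = 1 ∧ d 2 = 0) ∨
        (d 0 = 0 ∧ d 1 = 0 ∧ d 2 = 1) := by omega
    simp only [Finset.mem_insert, Finset.mem_singleton]
    rcases hcases with ⟨h0, h1, h2⟩ | ⟨h0, h1, h2⟩ | ⟨h0, h1, h2⟩
    · left; ext i; fin_cases i <;> simp [Finsupp.single_apply, h0, h1, h2]
    · right; left; ext i; fin_cases i <;> simp [Finsupp.single_apply, h0, h1, h2]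
    · right; right; ext i; fin_cases i <;> simp [Finsupp.single_apply, h0, h1, h2]
  rw [eval_eq' x p, Finset.sum_subset hsub (by
    intro d _ hd
    rw [MvPolynomial.notMem_support_iff.mp hd]
    ring)]
  rw [Finset.sum_insert (by simp [hne01, hne02]),
    Finset.sum_insert (by simp [hne12]), Finset.sum_singleton]
  simp [Fin.prod_univ_three, Finsupp.single_apply]
  ring

lemma expand2 (g : MvPolynomial (Fin 3) ℂ) (hg : g.IsHomogeneous 2) :
    ∃ A B C D E F : ℂ, ∀ x : Fin 3 → ℂ,
      eval x g = A * x 0 ^ 2 + B * x 1 ^ 2 + C * x 2 ^ 2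
        + D * (x 0 * x 1) + E * (x 0 * x 2) + F * (x 1 * x 2) := by
  classical
  set m1 : Fin 3 →₀ ℕ := Finsupp.single 0 2 with hm1
  set m2 : Fin 3 →₀ ℕ := Finsupp.single 1 2 with hm2
  set m3 : Fin 3 →₀ ℕ := Finsupp.single 2 2 with hm3
  set m4 : Fin 3 →₀ ℕ := Finsupp.single 0 1 + Finsupp.single 1 1 with hm4
  set m5 : Fin 3 →₀ ℕ := Finsupp.single 0 1 + Finsupp.single 2 1 with hm5
  set m6 : Fin 3 →₀ ℕ := Finsupp.single 1 1 + Finsupp.single 2 1 with hm6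
  have h12 : m1 ≠ m2 := by intro h; simpa [hm1, hm2, Finsupp.single_apply] using DFunLike.congr_fun h 0
  have h13 : m1 ≠ m3 := by intro h; simpa [hm1, hm3, Finsupp.single_apply] using DFunLike.congr_fun h 0
  have h14 : m1 ≠ m4 := by intro h; simpa [hm1, hm4, Finsupp.single_apply] using DFunLike.congr_fun h 0
  have h15 : m1 ≠ m5 := by intro h; simpa [hm1, hm5, Finsupp.single_apply] using DFunLike.congr_fun h 0
  have h16 : m1 ≠ m6 := by intro h; simpa [hm1, hm6, Finsupp.single_apply] using DFunLike.congr_fun h 0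
  have h23 : m2 ≠ m3 := by intro h; simpa [hm2, hm3, Finsupp.single_apply] using DFunLike.congr_fun h 1
  have h24 : m2 ≠ m4 := by intro h; simpa [hm2, hm4, Finsupp.single_apply] using DFunLike.congr_fun h 1
  have h25 : m2 ≠ m5 := by intro h; simpa [hm2, hm5, Finsupp.single_apply] using DFunLike.congr_fun h 1
  have h26 : m2 ≠ m6 := by intro h; simpa [hm2, hm6, Finsupp.single_apply] using DFunLike.congr_fun h 1
  have h34 : m3 ≠ m4 := by intro h; simpa [hm3, hm4, Finsupp.single_apply] using DFunLike.congr_fun h 2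
  have h35 : m3 ≠ m5 := by intro h; simpa [hm3, hm5, Finsupp.single_apply] using DFunLike.congr_fun h 2
  have h36 : m3 ≠ m6 := by intro h; simpa [hm3, hm6, Finsupp.single_apply] using DFunLike.congr_fun h 2
  have h45 : m4 ≠ m5 := by intro h; simpa [hm4, hm5, Finsupp.single_apply] using DFunLike.congr_fun h 1
  have h46 : m4 ≠ m6 := by intro h; simpa [hm4, hm6, Finsupp.single_apply] using DFunLike.congr_fun h 0
  have h56 : m5 ≠ m6 := by intro h; simpa [hm5, hm6, Finsupp.single_apply] using DFunLike.congr_fun h 0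
  refine ⟨coeff m1 g, coeff m2 g, coeff m3 g, coeff m4 g, coeff m5 g, coeff m6 g, fun x => ?_⟩
  have hsub : g.support ⊆ {m1, m2, m3, m4, m5, m6} := by
    intro d hd
    have h2 : d 0 + d 1 + d 2 = 2 := deg_three d (hg (mem_support_iff.mp hd))
    have hcases : (d 0 = 2 ∧ d 1 = 0 ∧ d 2 = 0) ∨ (d 0 = 0 ∧ d 1 = 2 ∧ d 2 = 0) ∨
        (d 0 = 0 ∧ d 1 = 0 ∧ d 2 = 2) ∨ (d 0 = 1 ∧ d 1 = 1 ∧ d 2 = 0) ∨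
        (d 0 = 1 ∧ d 1 = 0 ∧ d 2 = 1) ∨ (d 0 = 0 ∧ d 1 = 1 ∧ d 2 = 1) := by omega
    simp only [Finset.mem_insert, Finset.mem_singleton]
    rcases hcases with ⟨h0, h1, h2⟩ | ⟨h0, h1, h2⟩ | ⟨h0, h1, h2⟩ | ⟨h0, h1, h2⟩ |
        ⟨h0, h1, h2⟩ | ⟨h0, h1, h2⟩
    · left; ext i; fin_cases i <;> simp [hm1, Finsupp.single_apply, h0, h1, h2]
    · right; left; ext i; fin_cases i <;> simp [hm2, Finsupp.single_apply, h0, h1, h2]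
    · right; right; left; ext i; fin_cases i <;> simp [hm3, Finsupp.single_apply, h0, h1, h2]
    · right; right; right; left; ext i
      fin_cases i <;> simp [hm4, Finsupp.single_apply, h0, h1, h2]
    · right; right; right; right; left; ext i
      fin_cases i <;> simp [hm5, Finsupp.single_apply, h0, h1, h2]
    · right; right; right; right; right; ext i
      fin_cases i <;> simp [hm6, Finsupp.single_apply, h0, h1, h2]
  rw [eval_eq' x g, Finset.sum_subset hsub (by
    intro d _ hd
    rw [MvPolynomial.notMem_support_iff.mp hd]
    ring)]
  rw [Finset.sum_insert (by simp [h12, h13, h14, h15, h16]),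
    Finset.sum_insert (by simp [h23, h24, h25, h26]),
    Finset.sum_insert (by simp [h34, h35, h36]),
    Finset.sum_insert (by simp [h45, h46]),
    Finset.sum_insert (by simp [h56]), Finset.sum_singleton]
  simp [hm1, hm2, hm3, hm4, hm5, hm6, Fin.prod_univ_three, Finsupp.single_apply,
    Finsupp.add_apply]
  ring

lemma quadRoot (a b c : ℂ) (ha : a ≠ 0) : ∃ x : ℂ, a * x ^ 2 + b * x + c = 0 := by
  obtain ⟨s, hs⟩ := IsAlgClosed.exists_pow_nat_eq (k := ℂ) (b ^ 2 - 4 * a * c) (n := 2)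
    (by norm_num)
  refine ⟨(-b + s) / (2 * a), ?_⟩
  field_simp
  ring_nf
  linear_combination hs

lemma quadKill (B F C : ℂ) (h : ∀ t r : ℂ, B * t ^ 2 + F * (t * r) + C * r ^ 2 = 0 → t = 0) :
    C = 0 ∧ F = 0 := by
  have hC : C = 0 := by
    by_contra hC
    obtain ⟨r, hr⟩ := quadRoot C F B hC
    exact one_ne_zero (h 1 r (by linear_combination hr))
  refine ⟨hC, ?_⟩
  by_contra hF
  exact one_ne_zero (h 1 (-B / F) (by rw [hC]; field_simp; ring))

lemma solve_main (c c' y : Fin 3 → ℂ) (hm : c 1 * c' 2 - c 2 * c' 1 ≠ 0)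
    (hy : c 0 * y 0 + c 1 * y 1 + c 2 * y 2 = 0)
    (hy' : c' 0 * y 0 + c' 1 * y 1 + c' 2 * y 2 = 0)
    (hyne : y ≠ 0) :
    (∃ p : Fin 3 → ℂ,
      c 0 * p 0 + c 1 * p 1 + c 2 * p 2 = 1 ∧ c' 0 * p 0 + c' 1 * p 1 + c' 2 * p 2 = 0) ∧
    (∃ p : Fin 3 → ℂ,
      c 0 * p 0 + c 1 * p 1 + c 2 * p 2 = 0 ∧ c' 0 * p 0 + c' 1 * p 1 + c' 2 * p 2 = 1) ∧
    (∀ x : Fin 3 → ℂ, c 0 * x 0 + c 1 * x 1 + c 2 * x 2 = 0 →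
      c' 0 * x 0 + c' 1 * x 1 + c' 2 * x 2 = 0 → ∃ r : ℂ, x = r • y) := by
  set M := c 1 * c' 2 - c 2 * c' 1 with hM
  have hy0 : y 0 ≠ 0 := by
    intro h0
    apply hyne
    rw [h0] at hy hy'
    have h1 : y 1 = 0 := by
      have hh : M * y 1 = 0 := by linear_combination c' 2 * hy - c 2 * hy'
      exact (mul_eq_zero.mp hh).resolve_left hm
    have h2 : y 2 = 0 := by
      have hh : M * y 2 = 0 := by linear_combination c 1 * hy' - c' 1 * hy
      exact (mul_eq_zero.mp hh).resolve_left hm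
    funext i; fin_cases i <;> simp [h0, h1, h2]
  refine ⟨⟨![0, c' 2 / M, -c' 1 / M], by simp; field_simp; linear_combination hM,
      by simp; field_simp; ring⟩,
    ⟨![0, -c 2 / M, c 1 / M], by simp; field_simp; ring,
      by simp; field_simp; linear_combination hM⟩, ?_⟩
  intro x hx hx'
  refine ⟨x 0 / y 0, ?_⟩
  have hx1 : M * (x 1 * y 0) = M * (x 0 * y 1) := by
    have e1 : M * x 1 = -(x 0) * (c 0 * c' 2 - c 2 * c' 0) := by
      linear_combination c' 2 * hx - c 2 * hx'
    have e2 : M * y 1 = -(y 0) * (c 0 * c' 2 - c 2 * c' 0) := by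
      linear_combination c' 2 * hy - c 2 * hy'
    linear_combination y 0 * e1 - x 0 * e2
  have hx2 : M * (x 2 * y 0) = M * (x 0 * y 2) := by
    have e1 : M * x 2 = x 0 * (c 0 * c' 1 - c 1 * c' 0) := by
      linear_combination c 1 * hx' - c' 1 * hx
    have e2 : M * y 2 = y 0 * (c 0 * c' 1 - c 1 * c' 0) := by
      linear_combination c 1 * hy' - c' 1 * hy
    linear_combination y 0 * e1 - x 0 * e2
  have h1 := mul_left_cancel₀ hm hx1
  have h2 := mul_left_cancel₀ hm hx2
  funext i
  fin_cases i
  · show x 0 = x 0 / y 0 * y 0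
    field_simp
  · show x 1 = x 0 / y 0 * y 1
    field_simp
    linear_combination h1
  · show x 2 = x 0 / y 0 * y 2
    field_simp
    linear_combination h2

lemma solve_all (c c' y : Fin 3 → ℂ)
    (hm : ¬(c 1 * c' 2 - c 2 * c' 1 = 0 ∧ c 0 * c' 2 - c 2 * c' 0 = 0 ∧
      c 0 * c' 1 - c 1 * c' 0 = 0))
    (hy : c 0 * y 0 + c 1 * y 1 + c 2 * y 2 = 0)
    (hy' : c' 0 * y 0 + c' 1 * y 1 + c' 2 * y 2 = 0)
    (hyne : y ≠ 0) :
    (∃ p : Fin 3 → ℂ,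
      c 0 * p 0 + c 1 * p 1 + c 2 * p 2 = 1 ∧ c' 0 * p 0 + c' 1 * p 1 + c' 2 * p 2 = 0) ∧
    (∃ p : Fin 3 → ℂ,
      c 0 * p 0 + c 1 * p 1 + c 2 * p 2 = 0 ∧ c' 0 * p 0 + c' 1 * p 1 + c' 2 * p 2 = 1) ∧
    (∀ x : Fin 3 → ℂ, c 0 * x 0 + c 1 * x 1 + c 2 * x 2 = 0 →
      c' 0 * x 0 + c' 1 * x 1 + c' 2 * x 2 = 0 → ∃ r : ℂ, x = r • y) := by
  by_cases h0 : c 1 * c' 2 - c 2 * c' 1 = 0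
  · by_cases h1 : c 0 * c' 2 - c 2 * c' 0 = 0
    · -- third minor nonzero; permutation (0 1 2) ↦ (2 0 1)
      have h2 : c 0 * c' 1 - c 1 * c' 0 ≠ 0 := fun h => hm ⟨h0, h1, h⟩
      obtain ⟨⟨p, hp1, hp2⟩, ⟨q, hq1, hq2⟩, hker⟩ :=
        solve_main ![c 2, c 0, c 1] ![c' 2, c' 0, c' 1] ![y 2, y 0, y 1]
          (by simpa using h2)
          (by simp; linear_combination hy) (by simp; linear_combination hy')
          (by
            intro h
            apply hyne
            have e0 := congrFun h 0
            have e1 := congrFun h 1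
            have e2 := congrFun h 2
            simp at e0 e1 e2
            funext i; fin_cases i <;> simp [e0, e1, e2])
      simp at hp1 hp2 hq1 hq2
      refine ⟨⟨![p 1, p 2, p 0], by simp; linear_combination hp1,
          by simp; linear_combination hp2⟩,
        ⟨![q 1, q 2, q 0], by simp; linear_combination hq1, by simp; linear_combination hq2⟩,
        ?_⟩
      intro x hx hx'
      obtain ⟨r, hr⟩ := hker ![x 2, x 0, x 1] (by simp; linear_combination hx)
        (by simp; linear_combination hx')
      have e0 := congrFun hr 0
      have e1 := congrFun hr 1
      have e2 := congrFun hr 2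
      simp at e0 e1 e2
      exact ⟨r, by funext i; fin_cases i <;> simp [e0, e1, e2]⟩
    · -- second minor nonzero; swap 0 ↔ 1
      obtain ⟨⟨p, hp1, hp2⟩, ⟨q, hq1, hq2⟩, hker⟩ :=
        solve_main ![c 1, c 0, c 2] ![c' 1, c' 0, c' 2] ![y 1, y 0, y 2]
          (by simpa using h1)
          (by simp; linear_combination hy) (by simp; linear_combination hy')
          (by
            intro h
            apply hyne
            have e0 := congrFun h 0
            have e1 := congrFun h 1
            have e2 := congrFun h 2
            simp at e0 e1 e2
            funext i; fin_cases i <;> simp [e0, e1, e2])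
      simp at hp1 hp2 hq1 hq2
      refine ⟨⟨![p 1, p 0, p 2], by simp; linear_combination hp1,
          by simp; linear_combination hp2⟩,
        ⟨![q 1, q 0, q 2], by simp; linear_combination hq1, by simp; linear_combination hq2⟩,
        ?_⟩
      intro x hx hx'
      obtain ⟨r, hr⟩ := hker ![x 1, x 0, x 2] (by simp; linear_combination hx)
        (by simp; linear_combination hx')
      have e0 := congrFun hr 0
      have e1 := congrFun hr 1
      have e2 := congrFun hr 2
      simp at e0 e1 e2
      exact ⟨r, by funext i; fin_cases i <;> simp [e0, e1, e2]⟩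
  · exact solve_main c c' y h0 hy hy' hyne

end Stmt7Helpers

open Stmt7Helpers

theorem stmt7 (𝒬 : Submodule ℂ (MvPolynomial (Fin 3) ℂ))
    (hhom : ∀ Q ∈ 𝒬, MvPolynomial.IsHomogeneous Q 2)
    (yv : Fin 3 → ℂ) (hyv : yv ≠ 0)
    (l l' : MvPolynomial (Fin 3) ℂ)
    (hl : l.IsHomogeneous 1) (hl' : l'.IsHomogeneous 1)
    (hlne : l ≠ 0) (hl'ne : l' ≠ 0)
    (hdist : ∀ c : ℂ, l' ≠ c • l)
    (hly : eval yv l = 0) (hl'y : eval yv l' = 0)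
    (hgen : 𝒬 ≤ Submodule.span ℂ
      {Q : MvPolynomial (Fin 3) ℂ | Q ∈ 𝒬 ∧ Q ≠ 0 ∧
        MeetsOnlyAt Q l yv ∧ MeetsOnlyAt Q l' yv}) :
    ∀ Q ∈ 𝒬, Q ≠ 0 →
      ∃ L₁ L₂ : MvPolynomial (Fin 3) ℂ, L₁.IsHomogeneous 1 ∧ L₂.IsHomogeneous 1 ∧
        eval yv L₁ = 0 ∧ eval yv L₂ = 0 ∧ Q = L₁ * L₂ := by
  classical
  set c : Fin 3 → ℂ := fun i => coeff (Finsupp.single i 1) l with hc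
  set c' : Fin 3 → ℂ := fun i => coeff (Finsupp.single i 1) l' with hc'
  have hu : ∀ x : Fin 3 → ℂ, eval x l = c 0 * x 0 + c 1 * x 1 + c 2 * x 2 :=
    fun x => expand1 l hl x
  have hv : ∀ x : Fin 3 → ℂ, eval x l' = c' 0 * x 0 + c' 1 * x 1 + c' 2 * x 2 :=
    fun x => expand1 l' hl' x
  have hcy : c 0 * yv 0 + c 1 * yv 1 + c 2 * yv 2 = 0 := by rw [← hu yv]; exact hly
  have hc'y : c' 0 * yv 0 + c' 1 * yv 1 + c' 2 * yv 2 = 0 := by rw [← hv yv]; exact hl'y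
  -- the two linear forms are not proportional, so some 2x2 minor is nonzero
  have hminor : ¬(c 1 * c' 2 - c 2 * c' 1 = 0 ∧ c 0 * c' 2 - c 2 * c' 0 = 0 ∧
      c 0 * c' 1 - c 1 * c' 0 = 0) := by
    rintro ⟨e0, e1, e2⟩
    have hcne : ¬(c 0 = 0 ∧ c 1 = 0 ∧ c 2 = 0) := by
      rintro ⟨z0, z1, z2⟩
      exact hlne (MvPolynomial.funext fun x => by
        rw [hu x, z0, z1, z2]; simp)
    have : c 0 ≠ 0 ∨ c 1 ≠ 0 ∨ c 2 ≠ 0 := by tauto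
    rcases this with h | h | h
    · refine hdist (c' 0 / c 0) (MvPolynomial.funext fun x => ?_)
      rw [smul_eval, hv x, hu x]
      field_simp
      linear_combination x 1 * e2 + x 2 * e1
    · refine hdist (c' 1 / c 1) (MvPolynomial.funext fun x => ?_)
      rw [smul_eval, hv x, hu x]
      field_simp
      linear_combination -(x 0) * e2 + x 2 * e0
    · refine hdist (c' 2 / c 2) (MvPolynomial.funext fun x => ?_)
      rw [smul_eval, hv x, hu x]
      field_simp
      linear_combination -(x 0) * e1 - x 1 * e0
  obtain ⟨⟨p1, hp1u, hp1v⟩, ⟨p2, hp2u, hp2v⟩, hker⟩ := solve_all c c' yv hminor hcy hc'y hyv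
  -- every generator lies in the span of l², l l', l'²
  set W : Submodule ℂ (MvPolynomial (Fin 3) ℂ) :=
    Submodule.span ℂ {l * l, l * l', l' * l'} with hW
  have hGW : {Q : MvPolynomial (Fin 3) ℂ | Q ∈ 𝒬 ∧ Q ≠ 0 ∧
      MeetsOnlyAt Q l yv ∧ MeetsOnlyAt Q l' yv} ⊆ ↑W := by
    rintro Q₀ ⟨hQ₀, -, hml, hml'⟩
    obtain ⟨A, B, Cc, D, E, F, hex⟩ := expand2 Q₀ (hhom Q₀ hQ₀)
    set Aq := eval p1 Q₀ with hAq
    set Bq := eval p2 Q₀ with hBq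
    set Cq := eval yv Q₀ with hCq0
    set Dq := eval (p1 + p2) Q₀ - Aq - Bq with hDq
    set Eq := eval (p1 + yv) Q₀ - Aq - Cq with hEq0
    set Fq := eval (p2 + yv) Q₀ - Bq - Cq with hFq0
    have key : ∀ s t r : ℂ, eval (s • p1 + t • p2 + r • yv) Q₀ =
        Aq * s ^ 2 + Bq * t ^ 2 + Cq * r ^ 2 + Dq * (s * t) + Eq * (s * r) + Fq * (t * r) := by
      intro s t r
      simp only [hDq, hEq0, hFq0, hAq, hBq, hCq0, hex, Pi.add_apply, Pi.smul_apply,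
        smul_eq_mul]
      ring
    have hcond1 : ∀ t r : ℂ, Bq * t ^ 2 + Fq * (t * r) + Cq * r ^ 2 = 0 → t = 0 := by
      intro t r h
      have hx : eval ((0 : ℂ) • p1 + t • p2 + r • yv) Q₀ = 0 := by
        rw [key]; linear_combination h
      have hlx : eval ((0 : ℂ) • p1 + t • p2 + r • yv) l = 0 := by
        rw [hu]
        simp only [Pi.add_apply, Pi.smul_apply, smul_eq_mul]
        linear_combination t * hp2u + r * hcy
      obtain ⟨k, hk⟩ := hml _ hx hlx
      have h0 := congrFun hk 0
      have h1 := congrFun hk 1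
      have h2 := congrFun hk 2
      simp only [Pi.add_apply, Pi.smul_apply, smul_eq_mul, zero_mul, zero_add] at h0 h1 h2
      linear_combination c' 0 * h0 + c' 1 * h1 + c' 2 * h2 + (k - r) * hc'y - t * hp2v
    have hcond2 : ∀ s r : ℂ, Aq * s ^ 2 + Eq * (s * r) + Cq * r ^ 2 = 0 → s = 0 := by
      intro s r h
      have hx : eval (s • p1 + (0 : ℂ) • p2 + r • yv) Q₀ = 0 := by
        rw [key]; linear_combination h
      have hlx : eval (s • p1 + (0 : ℂ) • p2 + r • yv) l' = 0 := by
        rw [hv]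
        simp only [Pi.add_apply, Pi.smul_apply, smul_eq_mul]
        linear_combination s * hp1v + r * hc'y
      obtain ⟨k, hk⟩ := hml' _ hx hlx
      have h0 := congrFun hk 0
      have h1 := congrFun hk 1
      have h2 := congrFun hk 2
      simp only [Pi.add_apply, Pi.smul_apply, smul_eq_mul, zero_mul, add_zero, zero_add] at h0 h1 h2
      linear_combination c 0 * h0 + c 1 * h1 + c 2 * h2 + (k - r) * hcy - s * hp1u
    obtain ⟨hCq, hFq⟩ := quadKill Bq Fq Cq hcond1
    obtain ⟨-, hEq⟩ := quadKill Aq Eq Cq hcond2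
    have hrep : Q₀ = Aq • (l * l) + Dq • (l * l') + Bq • (l' * l') := by
      apply MvPolynomial.funext
      intro x
      obtain ⟨r, hr⟩ := hker (x - (eval x l) • p1 - (eval x l') • p2)
        (by
          simp only [Pi.sub_apply, Pi.smul_apply, smul_eq_mul]
          linear_combination -(hu x) - (eval x l) * hp1u - (eval x l') * hp2u)
        (by
          simp only [Pi.sub_apply, Pi.smul_apply, smul_eq_mul]
          linear_combination -(hv x) - (eval x l) * hp1v - (eval x l') * hp2v)
      have hxe : x = (eval x l) • p1 + (eval x l') • p2 + r • yv := by
        rw [← hr]; abel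
      calc eval x Q₀ = eval ((eval x l) • p1 + (eval x l') • p2 + r • yv) Q₀ := by rw [← hxe]
        _ = Aq * (eval x l) ^ 2 + Bq * (eval x l') ^ 2 + Dq * (eval x l * eval x l') := by
            rw [key, hCq, hFq, hEq]; ring
        _ = eval x (Aq • (l * l) + Dq • (l * l') + Bq • (l' * l')) := by
            simp only [map_add, smul_eval, map_mul]; ring
    rw [hrep]
    exact W.add_mem (W.add_mem
      (W.smul_mem _ (Submodule.subset_span (by simp)))
      (W.smul_mem _ (Submodule.subset_span (by simp))))
      (W.smul_mem _ (Submodule.subset_span (by simp)))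
  intro Q hQ hQne
  have hQW : Q ∈ W := (le_trans hgen (Submodule.span_le.mpr hGW)) hQ
  rw [hW, Submodule.mem_span_insert] at hQW
  obtain ⟨a, z, hz, hQeq⟩ := hQW
  rw [Submodule.mem_span_insert] at hz
  obtain ⟨b, z', hz', hzeq⟩ := hz
  rw [Submodule.mem_span_singleton] at hz'
  obtain ⟨cc, hcc⟩ := hz'
  have hQeval : ∀ x : Fin 3 → ℂ, eval x Q =
      a * (eval x l) ^ 2 + b * (eval x l * eval x l') + cc * (eval x l') ^ 2 := by
    intro x
    rw [hQeq, hzeq, ← hcc]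
    simp only [map_add, smul_eval, map_mul]
    ring
  have hcomb : ∀ (k k' : ℂ), (k • l + k' • l').IsHomogeneous 1 := by
    intro k k'
    exact Submodule.add_mem (homogeneousSubmodule (Fin 3) ℂ 1)
      (Submodule.smul_mem _ k hl) (Submodule.smul_mem _ k' hl')
  have hcomb1 : ∀ (k : ℂ), (l + k • l').IsHomogeneous 1 := by
    intro k
    have := hcomb 1 k
    rwa [one_smul] at this
  have hevcomb : ∀ (k k' : ℂ), eval yv (k • l + k' • l') = 0 := by
    intro k k'
    simp [smul_eval, hly, hl'y]
  by_cases ha : a = 0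
  · refine ⟨b • l + cc • l', l', hcomb b cc, hl', hevcomb b cc, hl'y, ?_⟩
    apply MvPolynomial.funext
    intro x
    rw [hQeval x, ha]
    simp only [map_add, map_mul, smul_eval]
    ring
  · obtain ⟨sq, hsq⟩ := IsAlgClosed.exists_pow_nat_eq (k := ℂ) (b ^ 2 - 4 * a * cc)
      (n := 2) (by norm_num)
    refine ⟨l + ((b - sq) / (2 * a)) • l', a • l + ((b + sq) / 2) • l',
      hcomb1 _, hcomb a _, ?_, hevcomb a _, ?_⟩
    · simp [smul_eval, hly, hl'y]
    · apply MvPolynomial.funext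
      intro x
      rw [hQeval x]
      simp only [map_add, map_mul, smul_eval]
      field_simp
      ring_nf
      linear_combination (eval x l') ^ 2 * hsq
end

section
/- Let Y ⊂ ℙᴺ be an irreducible hypersurface of degree d > 1 whose polar map φ is dominant, and let L ⊂ ℙᴺ be a general hyperplane. Then the point ⊥L ∈ ℙᴺ* corresponding to L does not lie in φ(L). -/
/-!
STATEMENT 14: Let `Y = {F = 0} ⊂ ℙᴺ` be an irreducible hypersurface of degree `d > 1`
whose polar map `φ` is dominant.  Then for a general hyperplane `L`, the point
`⊥L ∈ ℙᴺ*` dual to `L` does not lie in `φ(L)`.  A hyperplane is given by its (nonzero)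
coefficient vector `l`, which is also the affine representative of `⊥L`; dominance
means the image of the affine polar map (the gradient of `F`) is Zariski dense;
"general" means: valid for all `l` off the zero locus of some nonzero polynomial.
-/

open MvPolynomial


-- degree bound for aeval
lemma totalDegree_aeval_le {m n e : ℕ} (f : Fin m → MvPolynomial (Fin n) ℂ)
    (hf : ∀ i, (f i).totalDegree ≤ e) (G : MvPolynomial (Fin m) ℂ) :
    (aeval f G).totalDegree ≤ G.totalDegree * e := by
  rw [aeval_def, eval₂_eq]
  refine (totalDegree_finset_sum _ _).trans ?_
  apply Finset.sup_le
  intro u hu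
  refine (totalDegree_mul _ _).trans ?_
  have h1 : (algebraMap ℂ (MvPolynomial (Fin n) ℂ) (coeff u G)).totalDegree = 0 :=
    totalDegree_C _
  rw [h1, zero_add]
  refine (totalDegree_finset_prod _ _).trans ?_
  have h2 : ∀ i ∈ u.support, (f i ^ u i).totalDegree ≤ u i * e := fun i _ =>
    (totalDegree_pow _ _).trans (Nat.mul_le_mul_left _ (hf i))
  refine (Finset.sum_le_sum h2).trans ?_
  rw [← Finset.sum_mul]
  exact Nat.mul_le_mul_right _ (le_totalDegree hu)

lemma coord_le_fsum {α : Type*} (s : α →₀ ℕ) (i : α) : s i ≤ s.sum fun _ k => k := by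
  by_cases h : s i = 0
  · simp [h]
  · exact Finset.single_le_sum (fun _ _ => Nat.zero_le _) (Finsupp.mem_support_iff.mpr h)

lemma exists_annihilator {n e : ℕ} (he : 0 < e) (f : Fin (n + 1) → MvPolynomial (Fin n) ℂ)
    (hf : ∀ i, (f i).totalDegree ≤ e) :
    ∃ G : MvPolynomial (Fin (n + 1)) ℂ, G ≠ 0 ∧ aeval f G = 0 := by
  by_contra hcon
  push_neg at hcon
  set K := ((n + 1) * e) ^ n with hK
  set D := (n + 1) * K with hD
  set E := D * e with hE
  set A : Set (Fin (n + 1) →₀ ℕ) := {s | (s.sum fun _ k => k) ≤ D} with hA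
  set B : Set (Fin n →₀ ℕ) := {s | (s.sum fun _ k => k) ≤ E} with hB
  -- injections for cardinality bounds
  have injB : Function.Injective (fun (s : B) (i : Fin n) =>
      (⟨(s : Fin n →₀ ℕ) i, Nat.lt_succ_of_le ((coord_le_fsum _ i).trans s.2)⟩ : Fin (E + 1))) := by
    intro s t h
    ext i
    exact congrArg Fin.val (congrFun h i)
  have injA : Function.Injective (fun (g : Fin (n + 1) → Fin (K + 1)) =>
      (⟨Finsupp.equivFunOnFinite.symm (fun i => (g i : ℕ)), by
        show ((Finsupp.equivFunOnFinite.symm fun i => ((g i : ℕ))).sum fun _ k => k) ≤ D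
        rw [Finsupp.sum_fintype _ _ (fun _ => rfl)]
        calc (∑ i : Fin (n + 1), (Finsupp.equivFunOnFinite.symm fun i => ((g i : ℕ))) i)
            = ∑ i : Fin (n + 1), (g i : ℕ) := by rfl
          _ ≤ ∑ _i : Fin (n + 1), K := Finset.sum_le_sum fun i _ => Nat.le_of_lt_succ (g i).2
          _ = (n + 1) * K := by simp [Finset.sum_const, mul_comm]
        ⟩ : A)) := by
    intro g h hgh
    funext i
    have := congrArg (fun (s : A) => ((s : Fin (n + 1) →₀ ℕ) i)) hgh
    simpa using Fin.val_injective this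
  haveI : Finite B := Finite.of_injective _ injB
  haveI : Finite A := by
    have : Function.Injective (fun (s : A) (i : Fin (n + 1)) =>
        (⟨(s : Fin (n + 1) →₀ ℕ) i, Nat.lt_succ_of_le ((coord_le_fsum _ i).trans s.2)⟩ : Fin (D + 1))) := by
      intro s t h
      ext i
      exact congrArg Fin.val (congrFun h i)
    exact Finite.of_injective _ this
  haveI : Fintype A := Fintype.ofFinite _
  haveI : Fintype B := Fintype.ofFinite _
  -- the restricted linear map
  have hmaps : ∀ v : restrictTotalDegree (Fin (n + 1)) ℂ D,
      (aeval f : MvPolynomial (Fin (n + 1)) ℂ →ₐ[ℂ] MvPolynomial (Fin n) ℂ) v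
        ∈ restrictTotalDegree (Fin n) ℂ E := by
    intro v
    rw [mem_restrictTotalDegree]
    calc (aeval f (v : MvPolynomial (Fin (n + 1)) ℂ)).totalDegree
        ≤ (v : MvPolynomial (Fin (n + 1)) ℂ).totalDegree * e := totalDegree_aeval_le f hf _
      _ ≤ D * e := Nat.mul_le_mul_right _ ((mem_restrictTotalDegree _ _ _).mp v.2)
  let L : restrictTotalDegree (Fin (n + 1)) ℂ D →ₗ[ℂ] restrictTotalDegree (Fin n) ℂ E :=
    LinearMap.codRestrict _
      ((aeval f : MvPolynomial (Fin (n + 1)) ℂ →ₐ[ℂ] MvPolynomial (Fin n) ℂ).toLinearMap.domRestrict _)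
      hmaps
  have hLinj : Function.Injective L := by
    intro v w h
    have h2 : aeval f ((v : MvPolynomial (Fin (n + 1)) ℂ) - (w : MvPolynomial (Fin (n + 1)) ℂ)) = 0 := by
      have := congrArg (fun z : restrictTotalDegree (Fin n) ℂ E => (z : MvPolynomial (Fin n) ℂ)) h
      simpa [L, map_sub, sub_eq_zero] using this
    have hvw : (v : MvPolynomial (Fin (n + 1)) ℂ) - (w : MvPolynomial (Fin (n + 1)) ℂ) = 0 := by
      by_contra hne
      exact hcon _ hne h2
    exact Subtype.ext (sub_eq_zero.mp hvw)
  have hrank := LinearMap.finrank_le_finrank_of_injective hLinj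
  have hrA : Module.finrank ℂ (restrictTotalDegree (Fin (n + 1)) ℂ D) = Fintype.card A :=
    (Module.finrank_eq_card_basis (basisRestrictSupport ℂ A)).trans (by simp)
  have hrB : Module.finrank ℂ (restrictTotalDegree (Fin n) ℂ E) = Fintype.card B :=
    (Module.finrank_eq_card_basis (basisRestrictSupport ℂ B)).trans (by simp)
  rw [hrA, hrB] at hrank
  -- cardinality bounds
  have hcardA : (K + 1) ^ (n + 1) ≤ Fintype.card A := by
    calc (K + 1) ^ (n + 1) = Fintype.card (Fin (n + 1) → Fin (K + 1)) := by simp [Fintype.card_fun]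
      _ ≤ Fintype.card A := Fintype.card_le_of_injective _ injA
  have hcardB : Fintype.card B ≤ (E + 1) ^ n := by
    calc Fintype.card B ≤ Fintype.card (Fin n → Fin (E + 1)) := Fintype.card_le_of_injective _ injB
      _ = (E + 1) ^ n := by simp [Fintype.card_fun]
  -- numeric contradiction
  have hme : 1 ≤ (n + 1) * e := Nat.one_le_iff_ne_zero.mpr (by positivity)
  have key : (E + 1) ^ n < (K + 1) ^ (n + 1) := by
    have h1 : E + 1 ≤ (n + 1) * e * (K + 1) := by
      have : E + 1 = (n + 1) * e * K + 1 := by rw [hE, hD]; ring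
      rw [this, Nat.mul_add, Nat.mul_one]
      exact Nat.add_le_add_left hme _
    calc (E + 1) ^ n ≤ ((n + 1) * e * (K + 1)) ^ n := Nat.pow_le_pow_left h1 n
      _ = K * (K + 1) ^ n := by rw [mul_pow, hK]
      _ < (K + 1) * (K + 1) ^ n := by
          have hp : 0 < (K + 1) ^ n := Nat.pow_pos (Nat.succ_pos K)
          exact (Nat.mul_lt_mul_right hp).mpr (Nat.lt_succ_self K)
      _ = (K + 1) ^ (n + 1) := by rw [pow_succ, mul_comm]
  omega


lemma degree_fin {k : ℕ} (v : Fin k →₀ ℕ) : v.degree = ∑ i, v i := by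
  rw [Finsupp.degree]
  exact Finset.sum_subset (Finset.subset_univ _)
    (fun i _ hi => Finsupp.notMem_support_iff.mp hi)

lemma sub_single_add {k : ℕ} (u : Fin k →₀ ℕ) (i : Fin k) (h : u i ≠ 0) :
    u - Finsupp.single i 1 + Finsupp.single i 1 = u := by
  ext j
  rcases eq_or_ne j i with rfl | hji
  · simp [Finsupp.tsub_apply, Finsupp.single_apply]
    omega
  · simp [Finsupp.tsub_apply, Finsupp.single_apply, Ne.symm hji]

lemma X_mul_pderiv_monomial {k : ℕ} (i : Fin k) (u : Fin k →₀ ℕ) (a : ℂ) :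
    (X i : MvPolynomial (Fin k) ℂ) * pderiv i (monomial u a) = (u i) • monomial u a := by
  rw [pderiv_monomial]
  by_cases h : u i = 0
  · simp [h]
  · rw [X, monomial_mul, smul_monomial]
    rw [add_comm, sub_single_add u i h]
    congr 1
    push_cast
    ring
lemma euler_eval {k d : ℕ} {F : MvPolynomial (Fin k) ℂ} (h : F.IsHomogeneous d)
    (x : Fin k → ℂ) : ∑ i, x i * eval x (pderiv i F) = d * eval x F := by
  have H : ∑ i, (X i : MvPolynomial (Fin k) ℂ) * pderiv i F = d • F := by
    conv_lhs => rw [F.as_sum]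
    simp only [map_sum, Finset.mul_sum]
    rw [Finset.sum_comm]
    conv_rhs => rw [F.as_sum, Finset.smul_sum]
    refine Finset.sum_congr rfl fun u hu => ?_
    have hdeg : u.degree = d := by
      rw [Finsupp.degree_eq_weight_one]
      exact h (mem_support_iff.mp hu)
    calc ∑ i, (X i : MvPolynomial (Fin k) ℂ) * pderiv i (monomial u (coeff u F))
        = ∑ i, (u i) • monomial u (coeff u F) := by
          exact Finset.sum_congr rfl fun i _ => X_mul_pderiv_monomial i u _
      _ = (∑ i, u i) • monomial u (coeff u F) := by rw [Finset.sum_smul]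
      _ = d • monomial u (coeff u F) := by rw [← degree_fin, hdeg]
  have := congrArg (eval x) H
  simp only [map_sum, _root_.map_mul, eval_X, nsmul_eq_mul, _root_.map_mul] at this
  rw [this]
  simp

lemma hom_eval_scale {k m : ℕ} {φ : MvPolynomial (Fin k) ℂ} (h : φ.IsHomogeneous m)
    (s : ℂ) (x : Fin k → ℂ) :
    eval (fun i => s * x i) φ = s ^ m * eval x φ := by
  conv_lhs => rw [φ.as_sum]
  conv_rhs => rw [φ.as_sum]
  rw [map_sum, map_sum, Finset.mul_sum]
  refine Finset.sum_congr rfl fun u hu => ?_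
  have hdeg : u.degree = m := by
    rw [Finsupp.degree_eq_weight_one]
    exact h (mem_support_iff.mp hu)
  rw [eval_monomial, eval_monomial, Finsupp.prod, Finsupp.prod]
  have : ∏ i ∈ u.support, (s * x i) ^ u i
      = (∏ i ∈ u.support, s ^ u i) * ∏ i ∈ u.support, x i ^ u i := by
    rw [← Finset.prod_mul_distrib]
    exact Finset.prod_congr rfl fun i _ => mul_pow _ _ _
  rw [this, Finset.prod_pow_eq_pow_sum]
  rw [show ∑ i ∈ u.support, u i = m from hdeg ▸ rfl]
  ring

lemma pderiv_isHomogeneous {k d : ℕ} {F : MvPolynomial (Fin k) ℂ}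
    (h : F.IsHomogeneous d) (i : Fin k) : (pderiv i F).IsHomogeneous (d - 1) := by
  conv => rw [F.as_sum]
  rw [map_sum]
  refine IsHomogeneous.sum _ _ _ fun u hu => ?_
  rw [pderiv_monomial]
  by_cases hui : u i = 0
  · rw [hui]
    simp only [Nat.cast_zero, mul_zero]
    rw [monomial_zero]
    exact isHomogeneous_zero _ _ _
  · refine isHomogeneous_monomial _ ?_
    have hdeg : u.degree = d := by
      rw [Finsupp.degree_eq_weight_one]
      exact h (mem_support_iff.mp hu)
    set v : Fin k →₀ ℕ := u - Finsupp.single i 1 with hv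
    have hval : ∀ j, v j = u j - (if j = i then 1 else 0) := by
      intro j
      rcases eq_or_ne j i with rfl | hji
      · simp [hv, Finsupp.tsub_apply, Finsupp.single_apply]
      · simp [hv, Finsupp.tsub_apply, Finsupp.single_apply, Ne.symm hji, hji]
    rw [degree_fin] at hdeg ⊢
    rw [← Finset.add_sum_erase _ _ (Finset.mem_univ i)] at hdeg ⊢
    have he : ∑ j ∈ Finset.univ.erase i, v j
        = ∑ j ∈ Finset.univ.erase i, u j := by
      refine Finset.sum_congr rfl fun j hj => ?_
      rw [hval j, if_neg (Finset.mem_erase.mp hj).1]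
      omega
    rw [he, hval i, if_pos rfl]
    omega


lemma exists_vanishing_poly {N d : ℕ} (hd : 1 < d) (F : MvPolynomial (Fin (N + 1)) ℂ)
    (hF0 : F ≠ 0) (hFhom : F.IsHomogeneous d) :
    ∃ q : MvPolynomial (Fin (N + 1)) ℂ, q ≠ 0 ∧
      ∀ x : Fin (N + 1) → ℂ, eval x F = 0 →
        eval (fun i => eval x (pderiv i F)) q = 0 := by
  set g : Fin (N + 1) → MvPolynomial (Fin (N + 1)) ℂ := fun i => pderiv i F with hg
  set f : Fin (N + 2) → MvPolynomial (Fin (N + 1)) ℂ := Fin.cons F g with hf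
  have hfdeg : ∀ i, (f i).totalDegree ≤ d := by
    intro i
    refine Fin.cases ?_ ?_ i
    · simpa [hf] using hFhom.totalDegree_le
    · intro j
      have := (pderiv_isHomogeneous hFhom j).totalDegree_le
      simpa [hf, hg] using this.trans (Nat.sub_le d 1)
  obtain ⟨G, hG0, hGa⟩ := exists_annihilator (Nat.lt_of_lt_of_le Nat.one_pos hd.le) f hfdeg
  set P : Polynomial (MvPolynomial (Fin (N + 1)) ℂ) := finSuccEquiv ℂ (N + 1) G with hP
  have hP0 : P ≠ 0 := by
    intro h
    apply hG0
    have := (finSuccEquiv ℂ (N + 1)).injective (h.trans (map_zero _).symm)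
    simpa using this
  set Ψ : Polynomial (MvPolynomial (Fin (N + 1)) ℂ) →+* MvPolynomial (Fin (N + 1)) ℂ :=
    Polynomial.eval₂RingHom ((aeval g).toRingHom) F with hΨ
  have hcomp : ∀ (H : MvPolynomial (Fin (N + 2)) ℂ), Ψ (finSuccEquiv ℂ (N + 1) H) = aeval f H := by
    have : Ψ.comp ((finSuccEquiv ℂ (N + 1)) : MvPolynomial (Fin (N + 2)) ℂ →+* _)
        = (aeval f : MvPolynomial (Fin (N + 2)) ℂ →ₐ[ℂ] _).toRingHom := by
      apply ringHom_ext
      · intro a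
        simp [hΨ, finSuccEquiv_apply, algebraMap_eq]
      · intro i
        refine Fin.cases ?_ ?_ i
        · simp [hΨ, finSuccEquiv_X_zero, hf]
        · intro j
          simp [hΨ, finSuccEquiv_X_succ, hf]
    intro H
    exact congrFun (congrArg (fun (r : _ →+* _) => (r : MvPolynomial (Fin (N + 2)) ℂ → _)) this) H
  have hΨP : Ψ P = 0 := by rw [hP, hcomp, hGa]
  obtain ⟨Q, hPQ, hndvd⟩ := P.exists_eq_pow_rootMultiplicity_mul_and_not_dvd hP0 0
  rw [Polynomial.C_0, sub_zero] at hPQ hndvd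
  have hq0 : Q.coeff 0 ≠ 0 := fun h => hndvd (Polynomial.X_dvd_iff.mpr h)
  have hΨQ : Ψ Q = 0 := by
    rw [hPQ, map_mul, map_pow] at hΨP
    simp only [hΨ, Polynomial.coe_eval₂RingHom, Polynomial.eval₂_X] at hΨP
    exact (mul_eq_zero.mp hΨP).resolve_left (pow_ne_zero _ hF0)
  refine ⟨Q.coeff 0, hq0, ?_⟩
  intro x hx
  have h1 : (eval x : MvPolynomial (Fin (N + 1)) ℂ →+* ℂ) (Ψ Q) = 0 := by rw [hΨQ]; simp
  rw [hΨ, Polynomial.coe_eval₂RingHom, Polynomial.hom_eval₂, hx, Polynomial.eval₂_at_zero] at h1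
  have h2 : (eval x : MvPolynomial (Fin (N + 1)) ℂ →+* ℂ) (eval₂ C g (Q.coeff 0)) = 0 := by
    rw [← algebraMap_eq, ← aeval_def]
    exact h1
  rw [eval₂_comp_left (eval x) C g (Q.coeff 0)] at h2
  have h3 : (eval x : MvPolynomial (Fin (N + 1)) ℂ →+* ℂ).comp C = RingHom.id ℂ := by
    ext a
    simp
  rw [h3] at h2
  exact h2


noncomputable def polarMap {N : ℕ} (F : MvPolynomial (Fin (N + 1)) ℂ)
    (x : Fin (N + 1) → ℂ) : Fin (N + 1) → ℂ :=
  fun i => eval x (pderiv i F)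

theorem stmt14 {N d : ℕ} (hd : 1 < d)
    (F : MvPolynomial (Fin (N + 1)) ℂ)
    (hFirr : Irreducible F) (hFhom : F.IsHomogeneous d)
    (hdom : zcl (Set.range (polarMap F)) = Set.univ) :
    ∃ q : MvPolynomial (Fin (N + 1)) ℂ, q ≠ 0 ∧
      ∀ l : Fin (N + 1) → ℂ, eval l q ≠ 0 →
        ∀ x : Fin (N + 1) → ℂ, x ≠ 0 → (∑ i, l i * x i) = 0 →
          ∀ c : ℂ, c ≠ 0 → polarMap F x ≠ c • l := by
  obtain ⟨q, hq0, hqv⟩ := exists_vanishing_poly hd F hFirr.ne_zero hFhom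
  refine ⟨q, hq0, ?_⟩
  intro l hl x hx hlx c hc heq
  have hcoord : ∀ i, eval x (pderiv i F) = c * l i := by
    intro i
    have := congrFun heq i
    simpa [polarMap] using this
  have hFx : eval x F = 0 := by
    have hsum : ∑ i, x i * eval x (pderiv i F) = 0 := by
      calc ∑ i, x i * eval x (pderiv i F) = ∑ i, c * (l i * x i) := by
            refine Finset.sum_congr rfl fun i _ => ?_
            rw [hcoord i]; ring
        _ = c * ∑ i, l i * x i := by rw [Finset.mul_sum]
        _ = 0 := by rw [hlx, mul_zero]
    have heuler := euler_eval hFhom x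
    rw [hsum] at heuler
    have hd0 : (d : ℂ) ≠ 0 := Nat.cast_ne_zero.mpr (by omega)
    exact (mul_eq_zero.mp heuler.symm).resolve_left hd0
  obtain ⟨s, hs⟩ : ∃ s : ℂ, s ^ (d - 1) = c⁻¹ :=
    IsAlgClosed.exists_pow_nat_eq _ (n := d - 1) (by omega)
  have hFx' : eval (fun i => s * x i) F = 0 := by
    rw [hom_eval_scale hFhom s x, hFx, mul_zero]
  have hl_eq : (fun i => eval (fun j => s * x j) (pderiv i F)) = l := by
    funext i
    rw [hom_eval_scale (pderiv_isHomogeneous hFhom i) s x, hs, hcoord i]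
    field_simp
  have := hqv (fun i => s * x i) hFx'
  rw [hl_eq] at this
  exact hl this
end
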